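/- arXiv:1504.05401 — 8 statements merged into one kernel-verified Lean document; each statement's English description precedes it below -/
import Mathlib

section
/- If G is a prime graph (a graph whose only modules are trivial: the empty set, singletons, and the whole vertex set) that contains no induced banner and no induced house, then G contains no induced cycle on four vertices. -/
open SimpleGraph

/-- The banner: a 4-cycle 0-1-2-3-0 with a pendant vertex 4 adjacent to 0. -/
def banner : SimpleGraph (Fin 5) :=
  SimpleGraph.fromRel (fun i j => (i, j) ∈ [((0 : Fin 5), 1), (1, 2), (2, 3), (3, 0), (0, 4)])

/-- The house: a 4-cycle 0-1-2-3-0 with a vertex 4 adjacent to 2 and 3. -/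
def house : SimpleGraph (Fin 5) :=
  SimpleGraph.fromRel (fun i j => (i, j) ∈ [((0 : Fin 5), 1), (1, 2), (2, 3), (3, 0), (2, 4), (3, 4)])

/-- The chordless 4-cycle. -/
def cycle4 : SimpleGraph (Fin 4) :=
  SimpleGraph.fromRel (fun i j => j = i + 1)

/-- The chordless 5-cycle. -/
def cycle5 : SimpleGraph (Fin 5) :=
  SimpleGraph.fromRel (fun i j => j = i + 1)

/-- The complete bipartite graph K_{2,3}. -/
def k23 : SimpleGraph (Fin 2 ⊕ Fin 3) := completeBipartiteGraph (Fin 2) (Fin 3)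

/-- `G` contains no induced copy of `F` (an embedding preserves both adjacency
and non-adjacency). -/
def Free {W : Type*} {V : Type*} (F : SimpleGraph W) (G : SimpleGraph V) : Prop :=
  IsEmpty (F ↪g G)

/-- `v 0, ..., v 4` form an induced (chordless) 5-cycle of `G`, edges `v i - v (i+1)`. -/
def IsInducedC5 {V : Type*} (G : SimpleGraph V) (v : Fin 5 → V) : Prop :=
  Function.Injective v ∧ ∀ i j, G.Adj (v i) (v j) ↔ (j = i + 1 ∨ i = j + 1)

/-- `v 0, ..., v 4` form an induced house in `G`: 4-cycle `v 0, v 1, v 2, v 3`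
(standing for v1,v2,v3,v4) plus `v 4` (standing for v5) adjacent to `v 1` and `v 2`. -/
def IsInducedHouse {V : Type*} (G : SimpleGraph V) (v : Fin 5 → V) : Prop :=
  Function.Injective v ∧ ∀ i j, G.Adj (v i) (v j) ↔
    ((i, j) ∈ [((0 : Fin 5), 1), (1, 2), (2, 3), (3, 0), (1, 4), (2, 4)] ∨
     (j, i) ∈ [((0 : Fin 5), 1), (1, 2), (2, 3), (3, 0), (1, 4), (2, 4)])

/-- `Q` is disjoint from and anticomplete to the five vertices `v 0, ..., v 4`. -/
def Anticomplete5 {V : Type*} (G : SimpleGraph V) (Q : Set V) (v : Fin 5 → V) : Prop :=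
  (∀ i, v i ∉ Q) ∧ ∀ q ∈ Q, ∀ i, ¬ G.Adj q (v i)
/-- A module: no vertex outside `M` distinguishes two vertices of `M`. -/
def SimpleGraph.IsModuleSet {V : Type*} (G : SimpleGraph V) (M : Set V) : Prop :=
  ∀ z ∉ M, ∀ x ∈ M, ∀ y ∈ M, (G.Adj z x ↔ G.Adj z y)


/-! Let `a b c d` be an induced 4-cycle and `N` the common neighbourhood of `b` and `d`. Banner- and
house-freeness force every vertex that distinguishes two non-adjacent vertices of `N` into `N`. Hence
the component of `a` in the complement of `G[N]` is a module; it contains `a` and `c` but not `b`, so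
it is nontrivial. -/

theorem Free.false_of_adj_iff {V W : Type*} {G : SimpleGraph V} {F : SimpleGraph W}
    (hF : _root_.Free F G) (v : W → V) (hv : Function.Injective v)
    (hadj : ∀ i j, G.Adj (v i) (v j) ↔ F.Adj i j) : False :=
  hF.false ⟨⟨v, hv⟩, hadj _ _⟩

namespace SimpleGraph

variable {V : Type*} {G : SimpleGraph V}

structure IsInducedC4 (G : SimpleGraph V) (a b c d : V) : Prop where
  adj_ab : G.Adj a b
  adj_bc : G.Adj b c
  adj_cd : G.Adj c d
  adj_da : G.Adj d a
  not_adj_ac : ¬ G.Adj a c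
  not_adj_bd : ¬ G.Adj b d
  ne_ac : a ≠ c
  ne_bd : b ≠ d

namespace IsInducedC4

variable {a b c d : V}

theorem reflect (h : G.IsInducedC4 a b c d) : G.IsInducedC4 a d c b :=
  ⟨h.adj_da.symm, h.adj_cd.symm, h.adj_bc.symm, h.adj_ab.symm, h.not_adj_ac,
    fun h' => h.not_adj_bd h'.symm, h.ne_ac, h.ne_bd.symm⟩

theorem of_embedding (f : cycle4 ↪g G) : G.IsInducedC4 (f 0) (f 1) (f 2) (f 3) where
  adj_ab := f.map_adj_iff.2 (by simp [cycle4])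
  adj_bc := f.map_adj_iff.2 (by simp [cycle4])
  adj_cd := f.map_adj_iff.2 (by simp [cycle4])
  adj_da := f.map_adj_iff.2 (by simp [cycle4])
  not_adj_ac := fun h => by simpa [cycle4] using f.map_adj_iff.1 h
  not_adj_bd := fun h => by simpa [cycle4] using f.map_adj_iff.1 h
  ne_ac := fun h => by simpa using f.injective h
  ne_bd := fun h => by simpa using f.injective h

/-- A vertex `z` seeing `a` but not `c` and missing `b` would span a banner with the cycle if it
also misses `d`, and a house if it sees `d`. -/
theorem adj_of_adj_of_not_adj (h : G.IsInducedC4 a b c d) (hban : _root_.Free banner G)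
    (hhouse : _root_.Free house G) {z : V} (hza : G.Adj z a) (hzc : ¬ G.Adj z c) :
    G.Adj z b := by
  obtain ⟨hab, hbc, hcd, hda, hac, hbd, nac, nbd⟩ := h
  have nza : z ≠ a := hza.ne
  have nzb : z ≠ b := by rintro rfl; exact hzc hbc
  have nzc : z ≠ c := by rintro rfl; exact hac hza.symm
  have nzd : z ≠ d := by rintro rfl; exact hzc hcd.symm
  by_contra hzb
  by_cases hzd : G.Adj z d
  · refine hhouse.false_of_adj_iff ![b, c, d, a, z] ?_ ?_
    · intro i j hij
      fin_cases i <;> fin_cases j <;> simp_all [eq_comm]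
    · intro i j
      fin_cases i <;> fin_cases j <;> simp_all [house, G.adj_comm]
  · refine hban.false_of_adj_iff ![a, b, c, d, z] ?_ ?_
    · intro i j hij
      fin_cases i <;> fin_cases j <;> simp_all [eq_comm]
    · intro i j
      fin_cases i <;> fin_cases j <;> simp_all [banner, G.adj_comm]

theorem mem_commonNeighbors_left (h : G.IsInducedC4 a b c d) : a ∈ G.commonNeighbors b d :=
  G.mem_commonNeighbors.2 ⟨h.adj_ab.symm, h.adj_da⟩

theorem mem_commonNeighbors_right (h : G.IsInducedC4 a b c d) : c ∈ G.commonNeighbors b d :=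
  G.mem_commonNeighbors.2 ⟨h.adj_bc, h.adj_cd.symm⟩

theorem of_mem_commonNeighbors (ha : a ∈ G.commonNeighbors b d) (hc : c ∈ G.commonNeighbors b d)
    (hac : ¬ G.Adj a c) (nac : a ≠ c) (hbd : ¬ G.Adj b d) (nbd : b ≠ d) : G.IsInducedC4 a b c d :=
  ⟨ha.1.symm, hc.1, hc.2.symm, ha.2, hac, hbd, nac, nbd⟩

theorem mem_commonNeighbors_of_adj_of_not_adj (h : G.IsInducedC4 a b c d)
    (hban : _root_.Free banner G) (hhouse : _root_.Free house G) {z : V} (hza : G.Adj z a)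
    (hzc : ¬ G.Adj z c) : z ∈ G.commonNeighbors b d :=
  G.mem_commonNeighbors.2 ⟨(h.adj_of_adj_of_not_adj hban hhouse hza hzc).symm,
    (h.reflect.adj_of_adj_of_not_adj hban hhouse hza hzc).symm⟩

end IsInducedC4

/-- `Relation.EqvGen (G.NonAdjOn N)` is connectivity in the complement of `G[N]`, with singleton
classes outside `N`. -/
def NonAdjOn (G : SimpleGraph V) (N : Set V) (u v : V) : Prop :=
  u ∈ N ∧ v ∈ N ∧ ¬ G.Adj u v

def anticomponent (G : SimpleGraph V) (N : Set V) (a : V) : Set V :=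
  {v | Relation.EqvGen (G.NonAdjOn N) a v}

variable {N : Set V} {a u v : V}

theorem NonAdjOn.symm (h : G.NonAdjOn N u v) : G.NonAdjOn N v u :=
  ⟨h.2.1, h.1, fun h' => h.2.2 h'.symm⟩

theorem mem_anticomponent_self : a ∈ G.anticomponent N a :=
  Relation.EqvGen.refl a

theorem mem_anticomponent_of_nonAdjOn (hu : u ∈ G.anticomponent N a) (huv : G.NonAdjOn N u v) :
    v ∈ G.anticomponent N a :=
  hu.trans _ _ _ (.rel _ _ huv)

theorem anticomponent_subset (ha : a ∈ N) : G.anticomponent N a ⊆ N := by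
  suffices ∀ u v, Relation.EqvGen (G.NonAdjOn N) u v → (u ∈ N ↔ v ∈ N) from
    fun v hv => (this a v hv).1 ha
  intro u v huv
  induction huv with
  | rel u v h => exact iff_of_true h.1 h.2.1
  | refl => rfl
  | symm _ _ _ ih => exact ih.symm
  | trans _ _ _ _ _ ih₁ ih₂ => exact ih₁.trans ih₂

section Closed

variable (hN : ∀ u v z, G.NonAdjOn N u v → G.Adj z u → ¬ G.Adj z v → z ∈ N)
include hN

theorem adj_of_nonAdjOn_of_notMem_anticomponent {z : V} (hz : z ∉ G.anticomponent N a)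
    (hu : u ∈ G.anticomponent N a) (huv : G.NonAdjOn N u v) (hzu : G.Adj z u) : G.Adj z v := by
  by_contra hzv
  have hv := mem_anticomponent_of_nonAdjOn hu huv
  exact hz (mem_anticomponent_of_nonAdjOn hv ⟨huv.2.1, hN u v z huv hzu hzv, fun h => hzv h.symm⟩)

theorem isModuleSet_anticomponent : G.IsModuleSet (G.anticomponent N a) := by
  intro z hz
  suffices ∀ u v, Relation.EqvGen (G.NonAdjOn N) u v →
      u ∈ G.anticomponent N a → (G.Adj z u ↔ G.Adj z v) from
    fun x hx y hy => this x y (hx.symm.trans _ _ _ hy) hx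
  intro u v huv
  induction huv with
  | rel u v h =>
    intro hu
    exact ⟨adj_of_nonAdjOn_of_notMem_anticomponent hN hz hu h,
      adj_of_nonAdjOn_of_notMem_anticomponent hN hz (mem_anticomponent_of_nonAdjOn hu h) h.symm⟩
  | refl => exact fun _ => Iff.rfl
  | symm u v huv ih => exact fun hv => (ih (hv.trans _ _ _ huv.symm)).symm
  | trans u v w huv _ ih₁ ih₂ => exact fun hu => (ih₁ hu).trans (ih₂ (hu.trans _ _ _ huv))

end Closed

theorem IsInducedC4.isModuleSet_anticomponent {b c d : V} (h : G.IsInducedC4 a b c d)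
    (hban : _root_.Free banner G) (hhouse : _root_.Free house G) :
    G.IsModuleSet (G.anticomponent (G.commonNeighbors b d) a) :=
  SimpleGraph.isModuleSet_anticomponent fun _u _v _z ⟨hu, hv, huv⟩ hzu hzv =>
    (of_mem_commonNeighbors hu hv huv (fun huv => hzv (huv ▸ hzu)) h.not_adj_bd
      h.ne_bd).mem_commonNeighbors_of_adj_of_not_adj hban hhouse hzu hzv

end SimpleGraph

theorem stmt_0 {V : Type*} (G : SimpleGraph V)
    (hprime : ∀ M : Set V, G.IsModuleSet M → M = ∅ ∨ (∃ u, M = {u}) ∨ M = Set.univ)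
    (hban : _root_.Free banner G) (hhouse : _root_.Free house G) :
    _root_.Free cycle4 G := by
  refine ⟨fun f => ?_⟩
  have hC := IsInducedC4.of_embedding f
  set M := G.anticomponent (G.commonNeighbors (f 1) (f 3)) (f 0)
  have haM : f 0 ∈ M := mem_anticomponent_self
  have hcM : f 2 ∈ M := mem_anticomponent_of_nonAdjOn haM
    ⟨hC.mem_commonNeighbors_left, hC.mem_commonNeighbors_right, hC.not_adj_ac⟩
  have hbM : f 1 ∉ M := fun hb =>
    G.notMem_commonNeighbors_left _ _ (anticomponent_subset hC.mem_commonNeighbors_left hb)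
  rcases hprime M (hC.isModuleSet_anticomponent hban hhouse) with hM | ⟨u, hM⟩ | hM
  · exact hM.subset haM
  · exact hC.ne_ac ((hM.subset haM).trans (hM.subset hcM).symm)
  · exact hbM (hM ▸ Set.mem_univ _)
end

section
/- Let G be a (P6, banner)-free graph containing an induced 5-cycle H with vertices v1,...,v5 (indices mod 5). If a vertex x outside H has exactly three neighbors on H, then these three neighbors are consecutive on the cycle, i.e., N_H(x) = {v_{i-1}, v_i, v_{i+1}} for some i. -/
open SimpleGraph

/-!
If the three neighbours of `x` on the cycle are not consecutive, then `x` sees `v a` and `v (a+2)`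
but neither `v (a+1)` nor `v (a+4)` for some `a`. Then `v a, x, v (a+2), v (a+1)` is an induced
4-cycle and `v (a+4)` is a pendant vertex at `v a`: a banner. Among the 3-subsets of `Fin 5`,
the intervals are exactly those without this pattern.
-/

lemma Free.false_of_injective_of_adj_iff {W V : Type*} {F : SimpleGraph W} {G : SimpleGraph V}
    (hF : _root_.Free F G) (f : W → V) (hf : Function.Injective f)
    (hadj : ∀ i j, G.Adj (f i) (f j) ↔ F.Adj i j) : False :=
  hF.false ⟨⟨f, hf⟩, hadj _ _⟩

namespace IsInducedC5

variable {V : Type*} {G : SimpleGraph V} {v : Fin 5 → V}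

lemma rotate (hC5 : IsInducedC5 G v) (a : Fin 5) : IsInducedC5 G (fun i => v (i + a)) := by
  refine ⟨hC5.1.comp (add_left_injective a), fun i j => ?_⟩
  simp only [hC5.2, add_right_comm _ a 1, add_left_inj]

lemma adj_one_or_adj_four (hban : _root_.Free banner G) (hC5 : IsInducedC5 G v) {x : V}
    (hx : ∀ i, x ≠ v i) (h0 : G.Adj x (v 0)) (h2 : G.Adj x (v 2)) :
    G.Adj x (v 1) ∨ G.Adj x (v 4) := by
  by_contra! h
  obtain ⟨h1, h4⟩ := h
  refine hban.false_of_injective_of_adj_iff ![v 0, x, v 2, v 1, v 4]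
    (fun i j hij => ?_) (fun i j => ?_)
  · fin_cases i <;> fin_cases j <;> simp_all [hC5.1.eq_iff, eq_comm (a := x)]
  · fin_cases i <;> fin_cases j <;> simp [banner, hC5.2, G.adj_comm (v _) x, h0, h1, h2, h4]

lemma adj_add_one_or_adj_add_four (hban : _root_.Free banner G) (hC5 : IsInducedC5 G v) {x : V}
    (hx : ∀ i, x ≠ v i) (a : Fin 5) (ha : G.Adj x (v a)) (ha₂ : G.Adj x (v (a + 2))) :
    G.Adj x (v (a + 1)) ∨ G.Adj x (v (a + 4)) := by
  simpa only [add_comm _ a] using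
    (hC5.rotate a).adj_one_or_adj_four hban (fun i => hx _) (by simpa using ha)
      (by simpa only [add_comm _ a] using ha₂)

end IsInducedC5

lemma Fin.exists_eq_consecutive_of_card_eq_three (S : Finset (Fin 5)) (hS : S.card = 3)
    (hgap : ∀ a ∈ S, a + 2 ∈ S → a + 1 ∈ S ∨ a + 4 ∈ S) :
    ∃ i, S = {i - 1, i, i + 1} := by
  revert S
  decide

theorem stmt_1_general {V : Type*} (G : SimpleGraph V)
    (hban : _root_.Free banner G)
    (v : Fin 5 → V) (hC5 : IsInducedC5 G v)
    (x : V) (hx : ∀ i, x ≠ v i)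
    (h3 : ({j | G.Adj x (v j)} : Set (Fin 5)).ncard = 3) :
    ∃ i : Fin 5, {j | G.Adj x (v j)} = ({i - 1, i, i + 1} : Set (Fin 5)) := by
  classical
  obtain ⟨i, hi⟩ := Fin.exists_eq_consecutive_of_card_eq_three {j | G.Adj x (v j)}
    (by rwa [← Set.ncard_coe_finset, Finset.coe_filter_univ])
    (by simpa using hC5.adj_add_one_or_adj_add_four hban hx)
  refine ⟨i, ?_⟩
  simpa [Set.ext_iff, Finset.ext_iff] using hi

theorem stmt_1 {V : Type*} (G : SimpleGraph V)
    (hp6 : _root_.Free (SimpleGraph.pathGraph 6) G) (hban : _root_.Free banner G)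
    (v : Fin 5 → V) (hC5 : IsInducedC5 G v)
    (x : V) (hx : ∀ i, x ≠ v i)
    (h3 : ({j | G.Adj x (v j)} : Set (Fin 5)).ncard = 3) :
    ∃ i : Fin 5, {j | G.Adj x (v j)} = ({i - 1, i, i + 1} : Set (Fin 5)) :=
  stmt_1_general G hban v hC5 x hx h3
end

section
/- Let G be a (P6, banner)-free graph, let H be an induced house in G with vertex set {v1,v2,v3,v4,v5} and edges v1v2, v2v3, v3v4, v4v1, v2v5, v3v5, and let Q be a connected subset of vertices disjoint from H and with no vertex of Q adjacent to any vertex of H. If a vertex x has exactly one neighbor on H and has a neighbor in Q, then a contradiction arises; i.e., no vertex with a neighbor in Q has exactly one neighbor on H. -/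
open SimpleGraph

/-!
If the unique neighbour of `x` on the house lies on its 4-cycle, then `x` and the 4-cycle induce
a banner. If it is the roof `v 4`, pick a neighbour `q ∈ Q` of `x`: since `q` has no neighbour on
the house, `q, x, v 4, v 1, v 0, v 3` is an induced `P6`.
-/

theorem cycle4_adj_add_iff_banner_adj (k i j : Fin 4) :
    cycle4.Adj (k + i) (k + j) ↔ banner.Adj i.castSucc j.castSucc := by
  revert k i j; simp only [cycle4, banner, fromRel_adj]; decide

theorem banner_adj_last_iff (i : Fin 4) : banner.Adj (Fin.last 4) i.castSucc ↔ i = 0 := by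
  revert i; simp only [banner, fromRel_adj]; decide

namespace SimpleGraph.Embedding

variable {V : Type*} {G : SimpleGraph V}

def pathGraphCons {n : ℕ} (e : pathGraph n ↪g G) (y : V) (hy : y ∉ Set.range e)
    (hadj : ∀ i, G.Adj y (e i) ↔ (i : ℕ) = 0) : pathGraph (n + 1) ↪g G where
  toFun := Fin.cons y e
  inj' := Fin.cons_injective_of_injective hy e.injective
  map_rel_iff' {a b} := by
    induction a using Fin.cases <;> induction b using Fin.cases <;>
      simp [pathGraph_adj, hadj, G.adj_comm _ y, e.map_adj_iff]

def bannerOfPendant (e : cycle4 ↪g G) (k : Fin 4) (y : V) (hy : y ∉ Set.range e)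
    (hadj : ∀ i, G.Adj y (e i) ↔ i = k) : banner ↪g G where
  toFun := Fin.snoc (fun i => e (k + i)) y
  inj' := Fin.snoc_injective_of_injective (e.injective.comp (add_right_injective k))
    (fun ⟨_, hi⟩ => hy ⟨_, hi⟩)
  map_rel_iff' {a b} := by
    induction a using Fin.lastCases <;> induction b using Fin.lastCases <;>
      simp only [Function.Embedding.coeFn_mk, Fin.snoc_last, Fin.snoc_castSucc, G.irrefl,
        banner.irrefl, hadj, G.adj_comm _ y, banner.adj_comm _ (Fin.last 4), banner_adj_last_iff,
        add_eq_left, e.map_adj_iff, cycle4_adj_add_iff_banner_adj]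

end SimpleGraph.Embedding

namespace IsInducedHouse

variable {V : Type*} {G : SimpleGraph V} {v : Fin 5 → V}

def cycle4Embedding (hH : IsInducedHouse G v) : cycle4 ↪g G where
  toFun i := v i.castSucc
  inj' := hH.1.comp (Fin.castSucc_injective 4)
  map_rel_iff' {a b} := by
    simp only [Function.Embedding.coeFn_mk, hH.2, cycle4, fromRel_adj]
    revert a b
    decide

def pathGraphEmbedding (hH : IsInducedHouse G v) : pathGraph 4 ↪g G where
  toFun i := v (![4, 1, 0, 3] i)
  inj' := hH.1.comp (by decide)
  map_rel_iff' {a b} := by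
    simp only [Function.Embedding.coeFn_mk, hH.2, pathGraph_adj]
    revert a b
    decide

theorem not_free_banner (hH : IsInducedHouse G v) {y : V} (hyv : y ∉ Set.range v) {k : Fin 4}
    (hy : ∀ j, G.Adj y (v j) ↔ j = k.castSucc) : ¬ _root_.Free banner G := fun hban =>
  hban.false <| hH.cycle4Embedding.bannerOfPendant k y (fun ⟨_, hi⟩ => hyv ⟨_, hi⟩)
    fun _ => (hy _).trans Fin.castSucc_inj

theorem not_free_pathGraph_six (hH : IsInducedHouse G v) {x q : V} (hxv : x ∉ Set.range v)
    (hqv : q ∉ Set.range v) (hx : ∀ j, G.Adj x (v j) ↔ j = 4) (hqx : G.Adj q x)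
    (hq : ∀ j, ¬ G.Adj q (v j)) : ¬ _root_.Free (pathGraph 6) G := fun hp6 => by
  let e₅ := hH.pathGraphEmbedding.pathGraphCons x (fun ⟨_, hi⟩ => hxv ⟨_, hi⟩)
    fun i => (hx _).trans (by revert i; decide)
  refine hp6.false <| e₅.pathGraphCons q ?_ fun i => ?_
  · rintro ⟨i, hi⟩
    induction i using Fin.cases with
    | zero => exact G.ne_of_adj hqx hi.symm
    | succ i => exact hqv ⟨_, hi⟩
  · induction i using Fin.cases with
    | zero => exact iff_of_true hqx rfl
    | succ i => exact iff_of_false (hq _) (Nat.succ_ne_zero _)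

end IsInducedHouse

theorem stmt_3_general {V : Type*} (G : SimpleGraph V)
    (hp6 : _root_.Free (SimpleGraph.pathGraph 6) G) (hban : _root_.Free banner G)
    (v : Fin 5 → V) (hH : IsInducedHouse G v)
    (Q : Set V) (hQ : Anticomplete5 G Q v)
    (x : V) (h1 : ({j | G.Adj x (v j)} : Set (Fin 5)).ncard = 1)
    (hxQ : ∃ q ∈ Q, G.Adj x q) :
    False := by
  obtain ⟨q, hqQ, hxq⟩ := hxQ
  obtain ⟨j, hj⟩ := Set.ncard_eq_one.mp h1
  have hx : ∀ i, G.Adj x (v i) ↔ i = j := fun i => Set.ext_iff.mp hj i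
  have hxv : x ∉ Set.range v := by
    rintro ⟨i, rfl⟩
    exact hQ.2 q hqQ i hxq.symm
  have hqv : q ∉ Set.range v := fun ⟨i, hi⟩ => hQ.1 i (hi ▸ hqQ)
  induction j using Fin.lastCases with
  | last => exact hH.not_free_pathGraph_six hxv hqv hx hxq.symm (hQ.2 q hqQ) hp6
  | cast k => exact hH.not_free_banner hxv hx hban

theorem stmt_3 {V : Type*} (G : SimpleGraph V)
    (hp6 : _root_.Free (SimpleGraph.pathGraph 6) G) (hban : _root_.Free banner G)
    (v : Fin 5 → V) (hH : IsInducedHouse G v)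
    (Q : Set V) (hQconn : (G.induce Q).Connected) (hQ : Anticomplete5 G Q v)
    (x : V) (h1 : ({j | G.Adj x (v j)} : Set (Fin 5)).ncard = 1)
    (hxQ : ∃ q ∈ Q, G.Adj x q) :
    False :=
  stmt_3_general G hp6 hban v hH Q hQ x h1 hxQ
end

section
/- Let G be a (P6, banner, C5)-free graph, H an induced house with vertices v1,...,v5 (4-cycle v1v2v3v4 plus v5 adjacent to v2, v3), and Q a connected vertex set disjoint from and anticomplete to H. Let B1 be the set of vertices x with N_H(x) = {v2,v3} and having a neighbor in Q, and B2 the set of vertices x with N_H(x) = {v1,v4} and having a neighbor in Q. Then B1 and B2 cannot both be nonempty. -/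
open SimpleGraph

/-! Take b₁ ∈ B1 and b₂ ∈ B2 (in the code the paper's vᵢ is `v (i - 1)`). A banner on
v₂ v₁ b₂ b₁ with pendant v₅ rules out the edge b₁b₂, and a C5 b₁ q b₂ v₁ v₂ rules out a common
neighbour q ∈ Q. So b₁ and b₂ are at distance at least 3 in G[Q ∪ {b₁, b₂}], and the first four
vertices b₁ x y z of a shortest path between them form an induced path with x, y, z ∈ Q ∪ {b₂},
all anticomplete to {v₃, v₅}. Then z y x b₁ v₃ v₅ is an induced P6. -/

section InducedSubgraphs

variable {V W : Type*} {G : SimpleGraph V}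

/-- Preserving adjacency and non-adjacency already forces `f` to be injective, except possibly
on pairs of vertices of `F` with the same neighbourhood. -/
theorem not_free_of_adj_iff {F : SimpleGraph W} (f : W → V)
    (hf : ∀ a b, G.Adj (f a) (f b) ↔ F.Adj a b)
    (htwins : ∀ a b, (∀ c, F.Adj a c ↔ F.Adj b c) → a ≠ b → f a ≠ f b) :
    ¬ _root_.Free F G := fun hF =>
  hF.false ⟨⟨f, fun a b hab => by_contra fun hne =>
    htwins a b (fun c => by rw [← hf, ← hf, hab]) hne hab⟩, hf _ _⟩

theorem cycle5_eq_of_forall_adj_iff :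
    ∀ a b : Fin 5, (∀ c, cycle5.Adj a c ↔ cycle5.Adj b c) → a = b := by
  simp only [cycle5, fromRel_adj]
  decide

theorem pathGraph_six_eq_of_forall_adj_iff :
    ∀ a b : Fin 6, (∀ c, (pathGraph 6).Adj a c ↔ (pathGraph 6).Adj b c) → a = b := by
  simp only [pathGraph_adj]
  decide

theorem banner_twins :
    ∀ a b : Fin 5, (∀ c, banner.Adj a c ↔ banner.Adj b c) → a ≠ b →
      a = 1 ∧ b = 3 ∨ a = 3 ∧ b = 1 := by
  simp only [banner, fromRel_adj]
  intro a b
  fin_cases a <;> fin_cases b <;> decide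

theorem not_free_cycle5_of_adj {x₀ x₁ x₂ x₃ x₄ : V}
    (e₀₁ : G.Adj x₀ x₁) (e₁₂ : G.Adj x₁ x₂) (e₂₃ : G.Adj x₂ x₃) (e₃₄ : G.Adj x₃ x₄)
    (e₄₀ : G.Adj x₄ x₀) (n₀₂ : ¬ G.Adj x₀ x₂) (n₀₃ : ¬ G.Adj x₀ x₃) (n₁₃ : ¬ G.Adj x₁ x₃)
    (n₁₄ : ¬ G.Adj x₁ x₄) (n₂₄ : ¬ G.Adj x₂ x₄) : ¬ _root_.Free cycle5 G :=
  not_free_of_adj_iff ![x₀, x₁, x₂, x₃, x₄]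
    (fun a b => by fin_cases a <;> fin_cases b <;> simp_all [cycle5, G.adj_comm])
    (fun a b h hne => absurd (cycle5_eq_of_forall_adj_iff a b h) hne)

theorem not_free_banner_of_adj {x₀ x₁ x₂ x₃ x₄ : V}
    (e₀₁ : G.Adj x₀ x₁) (e₁₂ : G.Adj x₁ x₂) (e₂₃ : G.Adj x₂ x₃) (e₃₀ : G.Adj x₃ x₀)
    (e₀₄ : G.Adj x₀ x₄) (n₀₂ : ¬ G.Adj x₀ x₂) (n₁₃ : ¬ G.Adj x₁ x₃) (n₁₄ : ¬ G.Adj x₁ x₄)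
    (n₂₄ : ¬ G.Adj x₂ x₄) (n₃₄ : ¬ G.Adj x₃ x₄) (d₁₃ : x₁ ≠ x₃) : ¬ _root_.Free banner G :=
  not_free_of_adj_iff ![x₀, x₁, x₂, x₃, x₄]
    (fun a b => by fin_cases a <;> fin_cases b <;> simp_all [banner, G.adj_comm])
    (fun a b h hne => by
      rcases banner_twins a b h hne with ⟨rfl, rfl⟩ | ⟨rfl, rfl⟩
      exacts [d₁₃, d₁₃.symm])

theorem not_free_pathGraph_six_of_adj {x₀ x₁ x₂ x₃ x₄ x₅ : V}
    (e₀₁ : G.Adj x₀ x₁) (e₁₂ : G.Adj x₁ x₂) (e₂₃ : G.Adj x₂ x₃) (e₃₄ : G.Adj x₃ x₄)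
    (e₄₅ : G.Adj x₄ x₅)
    (n₀₂ : ¬ G.Adj x₀ x₂) (n₀₃ : ¬ G.Adj x₀ x₃) (n₀₄ : ¬ G.Adj x₀ x₄) (n₀₅ : ¬ G.Adj x₀ x₅)
    (n₁₃ : ¬ G.Adj x₁ x₃) (n₁₄ : ¬ G.Adj x₁ x₄) (n₁₅ : ¬ G.Adj x₁ x₅)
    (n₂₄ : ¬ G.Adj x₂ x₄) (n₂₅ : ¬ G.Adj x₂ x₅) (n₃₅ : ¬ G.Adj x₃ x₅) :
    ¬ _root_.Free (pathGraph 6) G :=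
  not_free_of_adj_iff ![x₀, x₁, x₂, x₃, x₄, x₅]
    (fun a b => by fin_cases a <;> fin_cases b <;> simp_all [pathGraph_adj, G.adj_comm])
    (fun a b h hne => absurd (pathGraph_six_eq_of_forall_adj_iff a b h) hne)

end InducedSubgraphs

namespace SimpleGraph

variable {V : Type*} {G : SimpleGraph V}

theorem Walk.dist_getVert_of_length_eq_dist {u v : V} {p : G.Walk u v}
    (hp : p.length = G.dist u v) {i : ℕ} (hi : i ≤ p.length) :
    G.dist u (p.getVert i) = i := by
  rw [← length_eq_dist_of_subwalk hp (p.isSubwalk_take i), take_length, min_eq_left hi]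

theorem Reachable.exists_induced_path_of_three_le_dist {u v : V} (hr : G.Reachable u v)
    (h : 3 ≤ G.dist u v) :
    ∃ x y z, G.Adj u x ∧ G.Adj x y ∧ G.Adj y z ∧ ¬ G.Adj u y ∧ ¬ G.Adj u z ∧ ¬ G.Adj x z ∧
      u ≠ y ∧ u ≠ z := by
  obtain ⟨p, hp⟩ := hr.exists_walk_length_eq_dist
  have hdist (i : ℕ) (hi : i ≤ 3) : G.dist u (p.getVert i) = i :=
    p.dist_getVert_of_length_eq_dist hp (by omega)
  have hnot_adj (i : ℕ) (hi : 2 ≤ i) (hi' : i ≤ 3) : ¬ G.Adj u (p.getVert i) := fun hadj => by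
    have := dist_eq_one_iff_adj.mpr hadj
    rw [hdist i hi'] at this
    omega
  refine ⟨p.getVert 1, p.getVert 2, p.getVert 3, dist_eq_one_iff_adj.mp (hdist 1 (by omega)),
    p.adj_getVert_succ (by omega), p.adj_getVert_succ (by omega), hnot_adj 2 le_rfl (by omega),
    hnot_adj 3 (by omega) le_rfl, fun hadj => ?_, fun heq => ?_, fun heq => ?_⟩
  · have := hadj.diff_dist_adj (u := u)
    rw [hdist 1 (by omega), hdist 3 le_rfl] at this
    omega
  · have := hdist 2 (by omega)
    rw [← heq, dist_self] at this
    omega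
  · have := hdist 3 le_rfl
    rw [← heq, dist_self] at this
    omega

theorem Connected.induce_insert {s : Set V} (hs : (G.induce s).Connected) {u w : V}
    (hw : w ∈ s) (hadj : G.Adj u w) : (G.induce (insert u s)).Connected := by
  simpa only [Set.singleton_union] using
    connected_induce_union (s := {u}) Preconnected.of_subsingleton hs.preconnected rfl hw hadj

theorem exists_induced_path_of_connected_induce {Q : Set V} (hQ : (G.induce Q).Connected)
    {a b qa qb : V} (hqa : qa ∈ Q) (hqb : qb ∈ Q) (ha : G.Adj a qa) (hb : G.Adj b qb)
    (hab : ¬ G.Adj a b) (hcommon : ∀ q ∈ Q, G.Adj a q → ¬ G.Adj b q) :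
    ∃ x ∈ insert b Q, ∃ y ∈ insert b Q, ∃ z ∈ insert b Q, G.Adj a x ∧ G.Adj x y ∧ G.Adj y z ∧
      ¬ G.Adj a y ∧ ¬ G.Adj a z ∧ ¬ G.Adj x z := by
  set H := G.induce (insert a (insert b Q))
  have hmem (w : (insert a (insert b Q) : Set V)) (hw : ⟨a, by simp⟩ ≠ w) : w.val ∈ insert b Q :=
    (Set.mem_insert_iff.mp w.2).resolve_left fun h => hw (Subtype.ext h.symm)
  have hr : H.Reachable ⟨a, by simp⟩ ⟨b, by simp⟩ :=
    ((hQ.induce_insert hqb hb).induce_insert (Set.mem_insert_of_mem b hqa) ha).preconnected _ _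
  have hfar : 2 < H.edist ⟨a, by simp⟩ ⟨b, by simp⟩ := by
    refine two_lt_edist_iff.mpr ⟨fun heq => ?_, hab, ?_⟩
    · obtain rfl : a = b := congrArg Subtype.val heq
      exact hcommon qa hqa ha ha
    · refine Set.eq_empty_iff_forall_notMem.mpr fun w hw => ?_
      obtain ⟨haw, hbw⟩ := H.mem_commonNeighbors.mp hw
      have hwQ : w.val ∈ Q := (Set.mem_insert_iff.mp (hmem w haw.ne)).resolve_left
        fun h => hbw.ne (Subtype.ext h.symm)
      exact hcommon w hwQ haw hbw
  obtain ⟨x, y, z, hax, hxy, hyz, hay, haz, hxz, hya, hza⟩ :=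
    hr.exists_induced_path_of_three_le_dist (by exact_mod_cast hr.coe_dist_eq_edist ▸ hfar)
  exact ⟨x, hmem x hax.ne, y, hmem y hya, z, hmem z hza, hax, hxy, hyz, hay, haz, hxz⟩

end SimpleGraph

section House

variable {V : Type*} {G : SimpleGraph V} {v : Fin 5 → V} {b₁ b₂ : V}

theorem IsInducedHouse.not_adj_of_free_banner (hH : IsInducedHouse G v)
    (hban : _root_.Free banner G) (hb₁ : ∀ j, G.Adj b₁ (v j) ↔ j = 1 ∨ j = 2)
    (hb₂ : ∀ j, G.Adj b₂ (v j) ↔ j = 0 ∨ j = 3) : ¬ G.Adj b₁ b₂ := fun h => by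
  have hv₀b₁ : v 0 ≠ b₁ := by
    rintro rfl
    simpa [hH.2] using hb₁ 2
  refine not_free_banner_of_adj (x₀ := v 1) (x₁ := v 0) (x₂ := b₂) (x₃ := b₁) (x₄ := v 4)
    ?_ ?_ h.symm ?_ ?_ ?_ ?_ ?_ ?_ ?_ hv₀b₁ hban <;>
    simp [hH.2, hb₁, hb₂, G.adj_comm (v _) b₁, G.adj_comm (v _) b₂]

theorem IsInducedHouse.not_adj_of_free_cycle5 (hH : IsInducedHouse G v)
    (hc5 : _root_.Free cycle5 G) (hb₁ : ∀ j, G.Adj b₁ (v j) ↔ j = 1 ∨ j = 2)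
    (hb₂ : ∀ j, G.Adj b₂ (v j) ↔ j = 0 ∨ j = 3) (hb₁b₂ : ¬ G.Adj b₁ b₂) {q : V}
    (hq : ∀ i, ¬ G.Adj q (v i)) (hb₁q : G.Adj b₁ q) : ¬ G.Adj b₂ q := fun h => by
  refine not_free_cycle5_of_adj (x₀ := b₁) (x₁ := q) (x₂ := b₂) (x₃ := v 0) (x₄ := v 1)
    hb₁q h.symm ?_ ?_ ?_ hb₁b₂ ?_ ?_ ?_ ?_ hc5 <;>
    simp [hH.2, hb₁, hb₂, hq, G.adj_comm (v _) b₁]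

theorem IsInducedHouse.not_free_pathGraph_six_s5 (hH : IsInducedHouse G v)
    (hb₁ : ∀ j, G.Adj b₁ (v j) ↔ j = 1 ∨ j = 2) {T : Set V}
    (hT : ∀ w ∈ T, ¬ G.Adj w (v 2) ∧ ¬ G.Adj w (v 4)) {x y z : V} (hx : x ∈ T) (hy : y ∈ T)
    (hz : z ∈ T) (hb₁x : G.Adj b₁ x) (hxy : G.Adj x y) (hyz : G.Adj y z)
    (hb₁y : ¬ G.Adj b₁ y) (hb₁z : ¬ G.Adj b₁ z) (hxz : ¬ G.Adj x z) :
    ¬ _root_.Free (pathGraph 6) G := by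
  obtain ⟨hx₂, hx₄⟩ := hT x hx
  obtain ⟨hy₂, hy₄⟩ := hT y hy
  obtain ⟨hz₂, hz₄⟩ := hT z hz
  refine not_free_pathGraph_six_of_adj (x₀ := z) (x₁ := y) (x₂ := x) (x₃ := b₁) (x₄ := v 2)
    (x₅ := v 4) hyz.symm hxy.symm hb₁x.symm ?_ ?_ (hxz ∘ .symm) (hb₁z ∘ .symm) hz₂ hz₄
    (hb₁y ∘ .symm) hy₂ hy₄ hx₂ hx₄ ?_ <;> simp [hH.2, hb₁]

end House

theorem stmt_5 {V : Type*} (G : SimpleGraph V)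
    (hp6 : _root_.Free (SimpleGraph.pathGraph 6) G) (hban : _root_.Free banner G)
    (hc5 : _root_.Free cycle5 G)
    (v : Fin 5 → V) (hH : IsInducedHouse G v)
    (Q : Set V) (hQconn : (G.induce Q).Connected) (hQ : Anticomplete5 G Q v) :
    ¬ (({x | {j | G.Adj x (v j)} = ({1, 2} : Set (Fin 5)) ∧ ∃ q ∈ Q, G.Adj x q} : Set V).Nonempty ∧
       ({x | {j | G.Adj x (v j)} = ({0, 3} : Set (Fin 5)) ∧ ∃ q ∈ Q, G.Adj x q} : Set V).Nonempty) := by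
  rintro ⟨⟨b₁, hb₁, q₁, hq₁, hb₁q₁⟩, b₂, hb₂, q₂, hq₂, hb₂q₂⟩
  replace hb₁ : ∀ j, G.Adj b₁ (v j) ↔ j = 1 ∨ j = 2 := fun j => Set.ext_iff.mp hb₁ j
  replace hb₂ : ∀ j, G.Adj b₂ (v j) ↔ j = 0 ∨ j = 3 := fun j => Set.ext_iff.mp hb₂ j
  have hb₁b₂ : ¬ G.Adj b₁ b₂ := hH.not_adj_of_free_banner hban hb₁ hb₂
  have hcommon (q : V) (hq : q ∈ Q) : G.Adj b₁ q → ¬ G.Adj b₂ q :=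
    hH.not_adj_of_free_cycle5 hc5 hb₁ hb₂ hb₁b₂ (hQ.2 q hq)
  have hfar : ∀ w ∈ insert b₂ Q, ¬ G.Adj w (v 2) ∧ ¬ G.Adj w (v 4) := by
    rintro w (rfl | hw)
    · simp [hb₂]
    · exact ⟨hQ.2 w hw 2, hQ.2 w hw 4⟩
  obtain ⟨x, hx, y, hy, z, hz, hb₁x, hxy, hyz, hb₁y, hb₁z, hxz⟩ :=
    exists_induced_path_of_connected_induce hQconn hq₁ hq₂ hb₁q₁ hb₂q₂ hb₁b₂ hcommon
  exact hH.not_free_pathGraph_six_s5 hb₁ hfar hx hy hz hb₁x hxy hyz hb₁y hb₁z hxz hp6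
end

section
/- Let G be a (P6, banner, C5)-free graph, H an induced house with vertices v1,...,v5 (4-cycle v1v2v3v4, v5 adjacent to v2 and v3), and Q a connected vertex set disjoint from and anticomplete to H. If a vertex x has exactly three neighbors on H and a neighbor in Q, then N_H(x) = {v2, v3, v5}. -/
/-! A vertex `x` with a neighbour `q` anticomplete to the house `H` cannot lie on an induced
`C₄` with three vertices of `H`, for `q` would hang off it as the pendant of a banner. So whenever
`x` sees both ends of an induced `P₃` of `H`, it also sees the middle vertex; likewise, seeing
both ends of an induced `P₄` of `H` forces a neighbour inside it, or `x` closes an induced `C₅`.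
Among the ten triples of vertices of `H`, only `{v₂, v₃, v₅}` survives these constraints. -/

open SimpleGraph

section InducedCopies

variable {W V : Type*} {F : SimpleGraph W} {G : SimpleGraph V}

theorem adj_iff_of_apply_eq {f : W → V} (hf : ∀ i j, G.Adj (f i) (f j) ↔ F.Adj i j) {i j : W}
    (hij : f i = f j) (k : W) : F.Adj k i ↔ F.Adj k j := by
  rw [← hf, ← hf, hij]

set_option synthInstance.maxSize 2000 in
theorem banner_twins_s6 {i j : Fin 5} (h : ∀ k, banner.Adj k i ↔ banner.Adj k j) :
    i = j ∨ (i = 1 ∧ j = 3) ∨ (i = 3 ∧ j = 1) := by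
  revert i j
  simp only [banner, fromRel_adj]
  decide

theorem cycle5_eq_of_forall_adj_iff_s6 {i j : Fin 5} (h : ∀ k, cycle5.Adj k i ↔ cycle5.Adj k j) :
    i = j := by
  revert i j
  simp only [cycle5, fromRel_adj]
  decide

/-- Otherwise `x a b c` is an induced `C₄` with pendant `q`. -/
theorem adj_of_free_banner (hban : _root_.Free banner G) {x q a b c : V} (hxq : G.Adj x q)
    (hqa : ¬ G.Adj q a) (hqb : ¬ G.Adj q b) (hqc : ¬ G.Adj q c)
    (hab : G.Adj a b) (hbc : G.Adj b c) (hac : ¬ G.Adj a c) (hne : a ≠ c)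
    (hxa : G.Adj x a) (hxc : G.Adj x c) : G.Adj x b := by
  by_contra hxb
  let f : Fin 5 → V := ![x, a, b, c, q]
  have hf : ∀ i j, G.Adj (f i) (f j) ↔ banner.Adj i j := by
    intro i j
    fin_cases i <;> fin_cases j <;>
      simp [f, banner, hxq, hxq.symm, hab, hab.symm, hbc, hbc.symm, hxa, hxa.symm, hxc,
        hxc.symm, hqa, hqb, hqc, hac, hxb, G.adj_comm a q, G.adj_comm b q, G.adj_comm c q,
        G.adj_comm c a, G.adj_comm b x]
  refine hban.elim ⟨⟨f, fun i j hij => ?_⟩, hf _ _⟩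
  rcases banner_twins_s6 (adj_iff_of_apply_eq hf hij) with h | ⟨rfl, rfl⟩ | ⟨rfl, rfl⟩
  · exact h
  · exact absurd hij hne
  · exact absurd hij.symm hne

/-- Otherwise `x a b c d` is an induced `C₅`. -/
theorem adj_or_adj_of_free_cycle5 (hc5 : _root_.Free cycle5 G) {x a b c d : V}
    (hab : G.Adj a b) (hbc : G.Adj b c) (hcd : G.Adj c d)
    (hac : ¬ G.Adj a c) (hbd : ¬ G.Adj b d) (had : ¬ G.Adj a d)
    (hxa : G.Adj x a) (hxd : G.Adj x d) : G.Adj x b ∨ G.Adj x c := by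
  by_contra! hxbc
  let f : Fin 5 → V := ![x, a, b, c, d]
  have hf : ∀ i j, G.Adj (f i) (f j) ↔ cycle5.Adj i j := by
    intro i j
    fin_cases i <;> fin_cases j <;>
      simp [f, cycle5, hab, hab.symm, hbc, hbc.symm, hcd, hcd.symm, hxa, hxa.symm, hxd,
        hxd.symm, hac, hbd, had, hxbc.1, hxbc.2, G.adj_comm c a, G.adj_comm d b, G.adj_comm d a,
        G.adj_comm b x, G.adj_comm c x]
  exact hc5.elim ⟨⟨f, fun i j hij => cycle5_eq_of_forall_adj_iff_s6 (adj_iff_of_apply_eq hf hij)⟩,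
    hf _ _⟩

end InducedCopies

namespace IsInducedHouse

variable {V : Type*} {G : SimpleGraph V} {v : Fin 5 → V}

theorem adj (hH : IsInducedHouse G v) {i j : Fin 5}
    (hij : (i, j) ∈ [((0 : Fin 5), 1), (1, 2), (2, 3), (3, 0), (1, 4), (2, 4)] ∨
      (j, i) ∈ [((0 : Fin 5), 1), (1, 2), (2, 3), (3, 0), (1, 4), (2, 4)] := by decide) :
    G.Adj (v i) (v j) :=
  (hH.2 i j).2 hij

theorem not_adj (hH : IsInducedHouse G v) {i j : Fin 5}
    (hij : ¬ ((i, j) ∈ [((0 : Fin 5), 1), (1, 2), (2, 3), (3, 0), (1, 4), (2, 4)] ∨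
      (j, i) ∈ [((0 : Fin 5), 1), (1, 2), (2, 3), (3, 0), (1, 4), (2, 4)]) := by decide) :
    ¬ G.Adj (v i) (v j) :=
  fun h => hij ((hH.2 i j).1 h)

theorem ne (hH : IsInducedHouse G v) {i j : Fin 5} (hij : i ≠ j := by decide) : v i ≠ v j :=
  hH.1.ne hij

end IsInducedHouse

set_option synthInstance.maxSize 2000 in
theorem eq_one_two_four_of_ncard_eq_three {s : Set (Fin 5)} (h3 : s.ncard = 3)
    (h103 : 1 ∈ s → 3 ∈ s → 0 ∈ s) (h012 : 0 ∈ s → 2 ∈ s → 1 ∈ s)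
    (h014 : 0 ∈ s → 4 ∈ s → 1 ∈ s) (h123 : 1 ∈ s → 3 ∈ s → 2 ∈ s)
    (h324 : 3 ∈ s → 4 ∈ s → 2 ∈ s) (h032 : 0 ∈ s → 2 ∈ s → 3 ∈ s)
    (h0324 : 0 ∈ s → 4 ∈ s → 3 ∈ s ∨ 2 ∈ s) (h3014 : 3 ∈ s → 4 ∈ s → 0 ∈ s ∨ 1 ∈ s) :
    s = {1, 2, 4} := by
  obtain ⟨t, rfl⟩ := s.toFinite.exists_finset_coe
  simp only [Set.ncard_coe_finset, Finset.mem_coe] at *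
  suffices t = {1, 2, 4} by simp [this]
  revert t
  decide

theorem stmt_6_general {V : Type*} (G : SimpleGraph V)
    (hban : _root_.Free banner G)
    (hc5 : _root_.Free cycle5 G)
    (v : Fin 5 → V) (hH : IsInducedHouse G v)
    (Q : Set V) (hQ : Anticomplete5 G Q v)
    (x : V) (h3 : ({j | G.Adj x (v j)} : Set (Fin 5)).ncard = 3)
    (hxQ : ∃ q ∈ Q, G.Adj x q) :
    {j | G.Adj x (v j)} = ({1, 2, 4} : Set (Fin 5)) := by
  obtain ⟨q, hqQ, hxq⟩ := hxQ
  have hq : ∀ i, ¬ G.Adj q (v i) := hQ.2 q hqQ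
  have mid {a b c : Fin 5} (hab : G.Adj (v a) (v b)) (hbc : G.Adj (v b) (v c))
      (hac : ¬ G.Adj (v a) (v c)) (hne : v a ≠ v c) :
      G.Adj x (v a) → G.Adj x (v c) → G.Adj x (v b) :=
    adj_of_free_banner hban hxq (hq a) (hq b) (hq c) hab hbc hac hne
  have inner {a b c d : Fin 5} (hab : G.Adj (v a) (v b)) (hbc : G.Adj (v b) (v c))
      (hcd : G.Adj (v c) (v d)) (hac : ¬ G.Adj (v a) (v c)) (hbd : ¬ G.Adj (v b) (v d))
      (had : ¬ G.Adj (v a) (v d)) :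
      G.Adj x (v a) → G.Adj x (v d) → G.Adj x (v b) ∨ G.Adj x (v c) :=
    adj_or_adj_of_free_cycle5 hc5 hab hbc hcd hac hbd had
  exact eq_one_two_four_of_ncard_eq_three h3
    (mid (b := 0) hH.adj hH.adj hH.not_adj hH.ne) (mid (b := 1) hH.adj hH.adj hH.not_adj hH.ne)
    (mid (b := 1) hH.adj hH.adj hH.not_adj hH.ne) (mid (b := 2) hH.adj hH.adj hH.not_adj hH.ne)
    (mid (b := 2) hH.adj hH.adj hH.not_adj hH.ne) (mid (b := 3) hH.adj hH.adj hH.not_adj hH.ne)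
    (inner (b := 3) (c := 2) hH.adj hH.adj hH.adj hH.not_adj hH.not_adj hH.not_adj)
    (inner (b := 0) (c := 1) hH.adj hH.adj hH.adj hH.not_adj hH.not_adj hH.not_adj)

theorem stmt_6 {V : Type*} (G : SimpleGraph V)
    (hp6 : _root_.Free (SimpleGraph.pathGraph 6) G) (hban : _root_.Free banner G)
    (hc5 : _root_.Free cycle5 G)
    (v : Fin 5 → V) (hH : IsInducedHouse G v)
    (Q : Set V) (hQconn : (G.induce Q).Connected) (hQ : Anticomplete5 G Q v)
    (x : V) (h3 : ({j | G.Adj x (v j)} : Set (Fin 5)).ncard = 3)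
    (hxQ : ∃ q ∈ Q, G.Adj x q) :
    {j | G.Adj x (v j)} = ({1, 2, 4} : Set (Fin 5)) :=
  stmt_6_general G hban hc5 v hH Q hQ x h3 hxQ
end

section
/- Let G be a (P6, banner, C5)-free graph, H an induced house with vertices v1,...,v5 (4-cycle v1v2v3v4, v5 adjacent to v2 and v3), and Q a connected vertex set disjoint from and anticomplete to H. If a vertex x has exactly four neighbors on H and a neighbor in Q, then N_H(x) = {v1, v2, v3, v4}. -/
open SimpleGraph

/-! If `x` misses a vertex `v k` of the 4-cycle of the house, then `x`, the two cycle-neighbours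
of `v k` and `v k` itself form an induced 4-cycle, and a neighbour of `x` in `Q` hangs off it as a
pendant vertex: a banner. So the one vertex `x` misses is `v 4`. -/

theorem Set.exists_eq_compl_singleton_of_ncard_add_one {α : Type*} [Finite α] {s : Set α}
    (h : s.ncard + 1 = Nat.card α) : ∃ k, s = {k}ᶜ := by
  have hcompl : sᶜ.ncard = 1 := by
    have := Set.ncard_add_ncard_compl s
    omega
  obtain ⟨k, hk⟩ := Set.ncard_eq_one.1 hcompl
  exact ⟨k, by rw [← hk, compl_compl]⟩

theorem not_free_banner_of_cycle4_pendant {V : Type*} {G : SimpleGraph V} {a b c d p : V}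
    (hac : a ≠ c) (hbd : b ≠ d) (hab : G.Adj a b) (hbc : G.Adj b c) (hcd : G.Adj c d) (hda : G.Adj d a)
    (hnac : ¬ G.Adj a c) (hnbd : ¬ G.Adj b d)
    (hpa : G.Adj p a) (hpb : ¬ G.Adj p b) (hpc : ¬ G.Adj p c) (hpd : ¬ G.Adj p d) :
    ¬ _root_.Free banner G := by
  have hbp : b ≠ p := fun h => hpc (h ▸ hbc)
  have hcp : c ≠ p := fun h => hpb (h ▸ hbc.symm)
  have hdp : d ≠ p := fun h => hpc (h ▸ hcd.symm)
  have hinj : Function.Injective ![a, b, c, d, p] := by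
    intro i j
    fin_cases i <;> fin_cases j <;>
      simp [hab.ne, hbc.ne, hcd.ne, hda.ne', hac, hbd, hpa.ne', hbp, hcp, hdp, eq_comm]
  refine fun h => h.false ⟨⟨_, hinj⟩, fun {i j} => ?_⟩
  fin_cases i <;> fin_cases j <;> simp [banner] <;>
    first | assumption | exact G.adj_symm ‹_› | exact mt G.adj_symm ‹_›

theorem stmt_7_general {V : Type*} (G : SimpleGraph V)
    (hban : _root_.Free banner G)
    (v : Fin 5 → V) (hH : IsInducedHouse G v)
    (Q : Set V) (hQ : Anticomplete5 G Q v)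
    (x : V) (h4 : ({j | G.Adj x (v j)} : Set (Fin 5)).ncard = 4)
    (hxQ : ∃ q ∈ Q, G.Adj x q) :
    {j | G.Adj x (v j)} = ({0, 1, 2, 3} : Set (Fin 5)) := by
  obtain ⟨q, hqQ, hxq⟩ := hxQ
  have hqv : ∀ j, ¬ G.Adj q (v j) := hQ.2 q hqQ
  have hxv : ∀ j, x ≠ v j := fun j h => hqv j (h ▸ hxq.symm)
  obtain ⟨k, hk⟩ := Set.exists_eq_compl_singleton_of_ncard_add_one
    (s := {j | G.Adj x (v j)}) (by simp [h4])
  have hx : ∀ j, G.Adj x (v j) ↔ j ≠ k := fun j => by simpa using Set.ext_iff.1 hk j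
  have hvx : ∀ j, G.Adj (v j) x ↔ j ≠ k := fun j => G.adj_comm _ _ |>.trans (hx j)
  rw [hk]
  fin_cases k
  · refine absurd hban (not_free_banner_of_cycle4_pendant (b := v 1) (c := v 0) (d := v 3)
      ?_ ?_ ?_ ?_ ?_ ?_ ?_ ?_ hxq.symm ?_ ?_ ?_) <;> simp [hx, hvx, hxv, hqv, hH.1.eq_iff, hH.2]
  · refine absurd hban (not_free_banner_of_cycle4_pendant (b := v 0) (c := v 1) (d := v 2)
      ?_ ?_ ?_ ?_ ?_ ?_ ?_ ?_ hxq.symm ?_ ?_ ?_) <;> simp [hx, hvx, hxv, hqv, hH.1.eq_iff, hH.2]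
  · refine absurd hban (not_free_banner_of_cycle4_pendant (b := v 1) (c := v 2) (d := v 3)
      ?_ ?_ ?_ ?_ ?_ ?_ ?_ ?_ hxq.symm ?_ ?_ ?_) <;> simp [hx, hvx, hxv, hqv, hH.1.eq_iff, hH.2]
  · refine absurd hban (not_free_banner_of_cycle4_pendant (b := v 0) (c := v 3) (d := v 2)
      ?_ ?_ ?_ ?_ ?_ ?_ ?_ ?_ hxq.symm ?_ ?_ ?_) <;> simp [hx, hvx, hxv, hqv, hH.1.eq_iff, hH.2]
  · ext j
    fin_cases j <;> simp

theorem stmt_7 {V : Type*} (G : SimpleGraph V)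
    (hp6 : _root_.Free (SimpleGraph.pathGraph 6) G) (hban : _root_.Free banner G)
    (hc5 : _root_.Free cycle5 G)
    (v : Fin 5 → V) (hH : IsInducedHouse G v)
    (Q : Set V) (hQconn : (G.induce Q).Connected) (hQ : Anticomplete5 G Q v)
    (x : V) (h4 : ({j | G.Adj x (v j)} : Set (Fin 5)).ncard = 4)
    (hxQ : ∃ q ∈ Q, G.Adj x q) :
    {j | G.Adj x (v j)} = ({0, 1, 2, 3} : Set (Fin 5)) :=
  stmt_7_general G hban v hH Q hQ x h4 hxQ
end

section
/- Let G be a (P6, banner, K_{2,3}, C5)-free graph, H an induced house with vertices v1,...,v5 (4-cycle v1v2v3v4, v5 adjacent to v2 and v3), and Q a connected vertex set disjoint from and anticomplete to H. Let A+ be the set of vertices outside H that have at least one neighbor on H and at least one neighbor in Q, and let B2 = {x in A+ : N_H(x) = {v1, v4}}. Then A+ \ B2 is a clique. -/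
open SimpleGraph

/-!
Let `x, y` be distinct nonadjacent vertices of `A⁺ \ B₂` with neighbours `qx, qy` in `Q`.
Because `qx` sees `x` but nothing of the house, banners through `x` and `qx`, together with a `C₅`
or `P₆` running along the house, force `x` to be adjacent to `v 1` and to both or neither of
`v 0`, `v 3`; the reflection of the house exchanging `v 0 ↔ v 3` and `v 1 ↔ v 2` halves this work.
If `x` and `y` both see `v 1` and `v 3`, then `qx` completes a `K₂,₃` or a banner. Otherwise one of
them, say `x`, misses `v 0` and `v 3`; then `P₆`-freeness makes every vertex of `Q` adjacent to `x`
or to a neighbour of `x` in `Q`. A common neighbour of `x` and `y` in `Q` gives a banner, and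
without one a neighbour of `qy` among the neighbours of `x` closes a `C₅` through `v 1`.
-/

instance : DecidableRel (pathGraph 6).Adj := fun _ _ => decidable_of_iff' _ pathGraph_adj
instance : DecidableRel cycle5.Adj := fun _ _ => decidable_of_iff' _ (fromRel_adj _ _ _)
instance : DecidableRel banner.Adj := fun _ _ => decidable_of_iff' _ (fromRel_adj _ _ _)
instance : DecidableRel k23.Adj :=
  fun _ _ => decidable_of_iff' _ (Iff.of_eq (completeBipartiteGraph_adj ..))

section

variable {V : Type*} {G : SimpleGraph V}

namespace Free

variable {W : Type*} {F : SimpleGraph W}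

/-- A map reproducing the adjacency of `F` is injective except possibly on pairs of twins of `F`,
so those are the only pairs whose images must be told apart by hand. -/
theorem false_of_adj_iff_s8 (h : _root_.Free F G) (f : W → V)
    (hf : ∀ a b, G.Adj (f a) (f b) ↔ F.Adj a b)
    (htwin : ∀ a b, a ≠ b → (∀ c, F.Adj a c ↔ F.Adj b c) → f a ≠ f b) : False := by
  refine h.false ⟨⟨f, fun a b hab => ?_⟩, hf _ _⟩
  by_contra hne
  exact htwin a b hne (fun c => by rw [← hf, ← hf, hab]) hab

theorem false_of_adj_iff_of_lt {n : ℕ} {F : SimpleGraph (Fin n)} (h : _root_.Free F G)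
    (f : Fin n → V) (hf : ∀ a b, a < b → (G.Adj (f a) (f b) ↔ F.Adj a b))
    (htwin : ∀ a b, a < b → (∀ c, F.Adj a c ↔ F.Adj b c) → f a ≠ f b) : False := by
  refine h.false_of_adj_iff_s8 f (fun a b => ?_) fun a b hab htw => ?_
  · rcases lt_trichotomy a b with hab | rfl | hab
    · exact hf a b hab
    · simp
    · rw [G.adj_comm, F.adj_comm]
      exact hf b a hab
  · rcases hab.lt_or_gt with hab | hab
    · exact htwin a b hab htw
    · exact (htwin b a hab fun c => (htw c).symm).symm

theorem false_of_induced_path6 (h : _root_.Free (pathGraph 6) G) {a b c d e f : V}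
    (hab : G.Adj a b) (hbc : G.Adj b c) (hcd : G.Adj c d) (hde : G.Adj d e) (hef : G.Adj e f)
    (hac : ¬G.Adj a c) (had : ¬G.Adj a d) (hae : ¬G.Adj a e) (haf : ¬G.Adj a f)
    (hbd : ¬G.Adj b d) (hbe : ¬G.Adj b e) (hbf : ¬G.Adj b f)
    (hce : ¬G.Adj c e) (hcf : ¬G.Adj c f) (hdf : ¬G.Adj d f) : False := by
  refine h.false_of_adj_iff_of_lt ![a, b, c, d, e, f] (fun i j hij => ?_) fun i j hij htw => ?_
  · fin_cases i <;> fin_cases j <;> simp_all [pathGraph_adj]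
  · exact absurd htw (by revert i j; decide)

theorem false_of_induced_cycle5 (h : _root_.Free cycle5 G) {a b c d e : V}
    (hab : G.Adj a b) (hbc : G.Adj b c) (hcd : G.Adj c d) (hde : G.Adj d e) (hae : G.Adj a e)
    (hac : ¬G.Adj a c) (had : ¬G.Adj a d) (hbd : ¬G.Adj b d) (hbe : ¬G.Adj b e)
    (hce : ¬G.Adj c e) : False := by
  refine h.false_of_adj_iff_of_lt ![a, b, c, d, e] (fun i j hij => ?_) fun i j hij htw => ?_
  · fin_cases i <;> fin_cases j <;> simp_all [cycle5]
  · exact absurd htw (by revert i j; decide)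

theorem false_of_induced_banner (h : _root_.Free banner G) {a b c d e : V}
    (hab : G.Adj a b) (hbc : G.Adj b c) (hcd : G.Adj c d) (had : G.Adj a d) (hae : G.Adj a e)
    (hac : ¬G.Adj a c) (hbd : ¬G.Adj b d) (hbe : ¬G.Adj b e) (hce : ¬G.Adj c e)
    (hde : ¬G.Adj d e) (hbd' : b ≠ d) : False := by
  refine h.false_of_adj_iff_of_lt ![a, b, c, d, e] (fun i j hij => ?_) fun i j hij htw => ?_
  · fin_cases i <;> fin_cases j <;> simp_all [banner]
  · have twins : ∀ i j : Fin 5, i < j → (∀ c, banner.Adj i c ↔ banner.Adj j c) → i = 1 ∧ j = 3 := by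
      decide
    obtain ⟨rfl, rfl⟩ := twins i j hij htw
    exact hbd'

theorem false_of_induced_k23 (h : _root_.Free k23 G) {a₁ a₂ b₁ b₂ b₃ : V}
    (h₁₁ : G.Adj a₁ b₁) (h₁₂ : G.Adj a₁ b₂) (h₁₃ : G.Adj a₁ b₃)
    (h₂₁ : G.Adj a₂ b₁) (h₂₂ : G.Adj a₂ b₂) (h₂₃ : G.Adj a₂ b₃)
    (ha : ¬G.Adj a₁ a₂) (hb₁₂ : ¬G.Adj b₁ b₂) (hb₁₃ : ¬G.Adj b₁ b₃) (hb₂₃ : ¬G.Adj b₂ b₃)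
    (ha' : a₁ ≠ a₂) (hb₁₂' : b₁ ≠ b₂) (hb₁₃' : b₁ ≠ b₃) (hb₂₃' : b₂ ≠ b₃) : False := by
  refine h.false_of_adj_iff_s8 (Sum.elim ![a₁, a₂] ![b₁, b₂, b₃]) (fun i j => ?_) fun i j hij htw => ?_
  · rcases i with i | i <;> rcases j with j | j <;> fin_cases i <;> fin_cases j <;>
      simp_all [k23, G.adj_comm b₁ a₁, G.adj_comm b₂ a₁, G.adj_comm b₃ a₁, G.adj_comm b₁ a₂,
        G.adj_comm b₂ a₂, G.adj_comm b₃ a₂, G.adj_comm a₂ a₁, G.adj_comm b₂ b₁,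
        G.adj_comm b₃ b₁, G.adj_comm b₃ b₂]
  · rcases i with i | i <;> rcases j with j | j <;> fin_cases i <;> fin_cases j <;>
      first | exact absurd rfl hij | exact absurd htw (by decide) | simp_all [eq_comm]

end Free

theorem adj_or_exists_adj_adj_of_connected {Q : Set V} (hQ : (G.induce Q).Connected)
    {x s₀ : V} (hs₀ : s₀ ∈ Q) (hxs₀ : G.Adj x s₀)
    (hP4 : ∀ s ∈ Q, ∀ b ∈ Q, ∀ c ∈ Q, G.Adj x s → G.Adj s b → G.Adj b c → ¬G.Adj x b →
      ¬G.Adj x c → G.Adj s c)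
    {q : V} (hq : q ∈ Q) : G.Adj x q ∨ ∃ s ∈ Q, G.Adj x s ∧ G.Adj s q := by
  set D : Q → Prop := fun b => G.Adj x b ∨ ∃ s ∈ Q, G.Adj x s ∧ G.Adj s b
  have step : ∀ a b : Q, G.Adj a b → D a → D b := by
    rintro ⟨a, ha⟩ ⟨b, hb⟩ hab (hxa | ⟨s, hs, hxs, hsa⟩)
    · exact .inr ⟨a, ha, hxa, hab⟩
    by_cases hxb : G.Adj x b
    · exact .inl hxb
    by_cases hxa : G.Adj x a
    · exact .inr ⟨a, ha, hxa, hab⟩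
    exact .inr ⟨s, hs, hxs, hP4 s hs a ha b hb hxs hsa hab hxa hxb⟩
  obtain ⟨w⟩ := hQ.preconnected ⟨s₀, hs₀⟩ ⟨q, hq⟩
  suffices ∀ a b : Q, (G.induce Q).Walk a b → D a → D b from this _ _ w (.inl hxs₀)
  intro a b w
  induction w with
  | nil => exact id
  | cons hab _ ih => exact fun ha => ih (step _ _ hab ha)

namespace IsInducedHouse

variable {v : Fin 5 → V}

theorem reflect (hH : IsInducedHouse G v) : IsInducedHouse G (v ∘ ![3, 2, 1, 0, 4]) :=
  ⟨hH.1.comp (by decide), fun i j => by simp only [Function.comp_apply, hH.2]; revert i j; decide⟩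

theorem adj_three_of_adj_zero (hp6 : _root_.Free (pathGraph 6) G) (hban : _root_.Free banner G)
    (hc5 : _root_.Free cycle5 G) (hH : IsInducedHouse G v) {x q : V} (hxq : G.Adj x q)
    (hq : ∀ i, ¬G.Adj q (v i)) (h0 : G.Adj x (v 0)) : G.Adj x (v 3) := by
  by_contra h3
  by_cases h2 : G.Adj x (v 2)
  · apply hban.false_of_induced_banner (a := x) (b := v 0) (c := v 3) (d := v 2) (e := q) <;>
      simp_all [hH.2, hH.1.eq_iff, G.adj_comm]
  by_cases h4 : G.Adj x (v 4)
  · apply hc5.false_of_induced_cycle5 (a := x) (b := v 0) (c := v 3) (d := v 2) (e := v 4) <;>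
      simp_all [hH.2]
  · apply hp6.false_of_induced_path6 (a := q) (b := x) (c := v 0) (d := v 3) (e := v 2)
      (f := v 4) <;> simp_all [hH.2, G.adj_comm]

theorem adj_zero_of_adj_three (hp6 : _root_.Free (pathGraph 6) G) (hban : _root_.Free banner G)
    (hc5 : _root_.Free cycle5 G) (hH : IsInducedHouse G v) {x q : V} (hxq : G.Adj x q)
    (hq : ∀ i, ¬G.Adj q (v i)) (h3 : G.Adj x (v 3)) : G.Adj x (v 0) :=
  hH.reflect.adj_three_of_adj_zero hp6 hban hc5 hxq (fun _ => hq _) h3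

theorem adj_zero_iff_adj_three (hp6 : _root_.Free (pathGraph 6) G)
    (hban : _root_.Free banner G) (hc5 : _root_.Free cycle5 G) (hH : IsInducedHouse G v)
    {x q : V} (hxq : G.Adj x q) (hq : ∀ i, ¬G.Adj q (v i)) : G.Adj x (v 0) ↔ G.Adj x (v 3) :=
  ⟨hH.adj_three_of_adj_zero hp6 hban hc5 hxq hq, hH.adj_zero_of_adj_three hp6 hban hc5 hxq hq⟩

theorem adj_one (hp6 : _root_.Free (pathGraph 6) G) (hban : _root_.Free banner G)
    (hc5 : _root_.Free cycle5 G) (hH : IsInducedHouse G v) {x q : V} (hxq : G.Adj x q)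
    (hq : ∀ i, ¬G.Adj q (v i)) (hx : ∃ i, G.Adj x (v i))
    (hx03 : {i | G.Adj x (v i)} ≠ {0, 3}) : G.Adj x (v 1) := by
  by_contra h1
  by_cases h0 : G.Adj x (v 0)
  · have h3 := hH.adj_three_of_adj_zero hp6 hban hc5 hxq hq h0
    by_cases h2 : G.Adj x (v 2)
    · apply hban.false_of_induced_banner (a := x) (b := v 0) (c := v 1) (d := v 2) (e := q) <;>
        simp_all [hH.2, hH.1.eq_iff, G.adj_comm]
    by_cases h4 : G.Adj x (v 4)
    · apply hban.false_of_induced_banner (a := x) (b := v 0) (c := v 1) (d := v 4) (e := q) <;>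
        simp_all [hH.2, hH.1.eq_iff, G.adj_comm]
    · refine hx03 (Set.ext fun i => ?_)
      fin_cases i <;> simp [*]
  · have h3 : ¬G.Adj x (v 3) := fun h3 => h0 (hH.adj_zero_of_adj_three hp6 hban hc5 hxq hq h3)
    by_cases h2 : G.Adj x (v 2)
    · apply hban.false_of_induced_banner (a := v 2) (b := v 1) (c := v 0) (d := v 3) (e := x) <;>
        simp_all [hH.2, hH.1.eq_iff, G.adj_comm]
    · have h4 : G.Adj x (v 4) := by
        obtain ⟨i, hi⟩ := hx
        fin_cases i <;> simp_all
      apply hp6.false_of_induced_path6 (a := q) (b := x) (c := v 4) (d := v 1) (e := v 0)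
        (f := v 3) <;> simp_all [hH.2, G.adj_comm]

theorem adj_or_exists_adj_adj (hp6 : _root_.Free (pathGraph 6) G) (hH : IsInducedHouse G v)
    {Q : Set V} (hQconn : (G.induce Q).Connected) (hQ : Anticomplete5 G Q v) {x s₀ q : V}
    (hx1 : G.Adj x (v 1)) (hx0 : ¬G.Adj x (v 0)) (hs₀ : s₀ ∈ Q) (hxs₀ : G.Adj x s₀)
    (hq : q ∈ Q) : G.Adj x q ∨ ∃ s ∈ Q, G.Adj x s ∧ G.Adj s q := by
  refine adj_or_exists_adj_adj_of_connected hQconn hs₀ hxs₀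
    (fun s hs b hb c hc hxs hsb hbc hxb hxc => ?_) hq
  by_contra hsc
  have hQv := hQ.2
  apply hp6.false_of_induced_path6 (a := v 0) (b := v 1) (c := x) (d := s) (e := b) (f := c) <;>
    simp_all [hH.2, G.adj_comm]

theorem adj_of_adj_one_three (hk23 : _root_.Free k23 G) (hban : _root_.Free banner G)
    (hH : IsInducedHouse G v) {Q : Set V} (hQ : Anticomplete5 G Q v) {x y q : V} (hxy : x ≠ y)
    (hx1 : G.Adj x (v 1)) (hx3 : G.Adj x (v 3)) (hy1 : G.Adj y (v 1)) (hy3 : G.Adj y (v 3))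
    (hq : q ∈ Q) (hxq : G.Adj x q) : G.Adj x y := by
  by_contra hxy'
  have hvq : ∀ i, v i ≠ q := fun i h => hQ.1 i (h ▸ hq)
  have hqv := hQ.2 q hq
  by_cases hyq : G.Adj y q
  · apply hk23.false_of_induced_k23 (a₁ := x) (a₂ := y) (b₁ := v 1) (b₂ := v 3) (b₃ := q) <;>
      simp_all [hH.2, hH.1.eq_iff, G.adj_comm]
  · apply hban.false_of_induced_banner (a := x) (b := v 3) (c := y) (d := v 1) (e := q) <;>
      simp_all [hH.2, hH.1.eq_iff, G.adj_comm]

theorem adj_of_not_adj_zero (hp6 : _root_.Free (pathGraph 6) G) (hban : _root_.Free banner G)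
    (hc5 : _root_.Free cycle5 G) (hH : IsInducedHouse G v) {Q : Set V}
    (hQconn : (G.induce Q).Connected) (hQ : Anticomplete5 G Q v) {x y qx qy : V} (hxy : x ≠ y)
    (hx1 : G.Adj x (v 1)) (hx0 : ¬G.Adj x (v 0)) (hx3 : ¬G.Adj x (v 3))
    (hy1 : G.Adj y (v 1)) (hy03 : G.Adj y (v 0) ↔ G.Adj y (v 3))
    (hqx : qx ∈ Q) (hxqx : G.Adj x qx) (hqy : qy ∈ Q) (hyqy : G.Adj y qy) : G.Adj x y := by
  by_contra hxy'
  have hQv := hQ.2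
  by_cases hcommon : ∃ q ∈ Q, G.Adj x q ∧ G.Adj y q
  · obtain ⟨q, hq, hxq, hyq⟩ := hcommon
    have hvq : ∀ i, v i ≠ q := fun i h => hQ.1 i (h ▸ hq)
    by_cases hy0 : G.Adj y (v 0)
    · have hy3 := hy03.1 hy0
      apply hban.false_of_induced_banner (a := y) (b := v 1) (c := x) (d := q) (e := v 3) <;>
        simp_all [hH.2, G.adj_comm]
    · apply hban.false_of_induced_banner (a := v 1) (b := x) (c := q) (d := y) (e := v 0) <;>
        simp_all [hH.2, G.adj_comm]
  push Not at hcommon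
  obtain hxqy | ⟨s, hs, hxs, hsqy⟩ := hH.adj_or_exists_adj_adj hp6 hQconn hQ hx1 hx0 hqx hxqx hqy
  · exact hcommon qy hqy hxqy hyqy
  have hys : ¬G.Adj y s := hcommon s hs hxs
  have hxqy : ¬G.Adj x qy := fun h => hcommon qy hqy h hyqy
  apply hc5.false_of_induced_cycle5 (a := x) (b := s) (c := qy) (d := y) (e := v 1) <;>
    simp_all [G.adj_comm]

end IsInducedHouse

end

theorem stmt_8 {V : Type*} (G : SimpleGraph V)
    (hp6 : _root_.Free (SimpleGraph.pathGraph 6) G) (hban : _root_.Free banner G)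
    (hk23 : _root_.Free k23 G) (hc5 : _root_.Free cycle5 G)
    (v : Fin 5 → V) (hH : IsInducedHouse G v)
    (Q : Set V) (hQconn : (G.induce Q).Connected) (hQ : Anticomplete5 G Q v) :
    G.IsClique
      (({x | (∀ i, x ≠ v i) ∧ (∃ i, G.Adj x (v i)) ∧ ∃ q ∈ Q, G.Adj x q} : Set V) \
        {x | {j | G.Adj x (v j)} = ({0, 3} : Set (Fin 5))}) := by
  rintro x ⟨⟨-, hxH, qx, hqx, hxqx⟩, hxB⟩ y ⟨⟨-, hyH, qy, hqy, hyqy⟩, hyB⟩ hxy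
  have hx1 := hH.adj_one hp6 hban hc5 hxqx (hQ.2 qx hqx) hxH hxB
  have hy1 := hH.adj_one hp6 hban hc5 hyqy (hQ.2 qy hqy) hyH hyB
  have hx03 := hH.adj_zero_iff_adj_three hp6 hban hc5 hxqx (hQ.2 qx hqx)
  have hy03 := hH.adj_zero_iff_adj_three hp6 hban hc5 hyqy (hQ.2 qy hqy)
  by_cases hx0 : G.Adj x (v 0)
  · by_cases hy0 : G.Adj y (v 0)
    · exact hH.adj_of_adj_one_three hk23 hban hQ hxy hx1 (hx03.1 hx0) hy1 (hy03.1 hy0) hqx hxqx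
    · exact (hH.adj_of_not_adj_zero hp6 hban hc5 hQconn hQ hxy.symm hy1 hy0 (mt hy03.2 hy0)
        hx1 hx03 hqy hyqy hqx hxqx).symm
  · exact hH.adj_of_not_adj_zero hp6 hban hc5 hQconn hQ hxy hx1 hx0 (mt hx03.2 hx0) hy1 hy03
      hqx hxqx hqy hyqy
end

section
/- Let G be a (P6, banner, C5)-free graph, H an induced house with vertices v1,...,v5 (4-cycle v1v2v3v4, v5 adjacent to v2 and v3), and Q a connected vertex set disjoint from and anticomplete to H. Then the set B2 of vertices x with N_H(x) = {v1, v4} that have a neighbor in Q is a clique. -/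
open SimpleGraph

/-!
Let `x, y` be nonadjacent with `N_H(x) = N_H(y) = {v1, v4}`, each with a neighbour in `Q`.
A common neighbour `q ∈ Q` would give a banner `v1 x q y` with pendant `v2`. Otherwise take a
shortest walk in `G[Q]` from a neighbour of `x` to a neighbour of `y`. If it is a single edge `ab`,
then `v1 x a b y` is a `C5`; if it is longer, minimality makes its first three vertices `a c d` an
induced path `x a c d`, and `v2 v1 x a c d` is a `P6`.
-/

section

variable {V W : Type*} {G : SimpleGraph V}

theorem adj_iff_of_forall_lt [LinearOrder W] {F : SimpleGraph W} {f : W → V}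
    (h : ∀ i j, i < j → (G.Adj (f i) (f j) ↔ F.Adj i j)) (i j : W) :
    G.Adj (f i) (f j) ↔ F.Adj i j := by
  rcases lt_trichotomy i j with hij | rfl | hij
  · exact h i j hij
  · simp
  · rw [G.adj_comm, F.adj_comm]
    exact h j i hij

/-- A map preserving adjacency and non-adjacency can only identify twins of `F`. -/
theorem Free.elim_of_adj_iff {F : SimpleGraph W} (hF : _root_.Free F G) {f : W → V}
    (hf : ∀ i j, G.Adj (f i) (f j) ↔ F.Adj i j)
    (htwins : ∀ i j, i ≠ j → (∀ k, F.Adj i k ↔ F.Adj j k) → f i ≠ f j) : False := by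
  refine hF.false ⟨⟨f, fun i j h => ?_⟩, hf _ _⟩
  by_contra hij
  exact htwins i j hij (fun k => by rw [← hf, ← hf, h]) h

/-- The vertices `1` and `3` of the banner are twins, hence the hypothesis `b ≠ d`. -/
theorem Free.elim_banner (h : _root_.Free banner G) {a b c d e : V}
    (hab : G.Adj a b) (hbc : G.Adj b c) (hcd : G.Adj c d) (hda : G.Adj d a) (hae : G.Adj a e)
    (hac : ¬G.Adj a c) (hbd : ¬G.Adj b d) (hbe : ¬G.Adj b e) (hce : ¬G.Adj c e)
    (hde : ¬G.Adj d e) (hne : b ≠ d) : False := by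
  refine h.elim_of_adj_iff (f := ![a, b, c, d, e]) (adj_iff_of_forall_lt fun i j hij => ?_)
    fun i j hij htw => ?_
  · fin_cases i <;> fin_cases j <;>
      simp [banner, hab, hbc, hcd, hda.symm, hae, hac, hbd, hbe, hce, hde] at hij ⊢
  · fin_cases i <;> fin_cases j <;>
      first
      | exact absurd rfl hij
      | exact absurd htw (by unfold banner; decide)
      | simpa using hne
      | simpa using hne.symm

theorem Free.elim_cycle5 (h : _root_.Free cycle5 G) {a b c d e : V}
    (hab : G.Adj a b) (hbc : G.Adj b c) (hcd : G.Adj c d) (hde : G.Adj d e) (hea : G.Adj e a)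
    (hac : ¬G.Adj a c) (had : ¬G.Adj a d) (hbd : ¬G.Adj b d) (hbe : ¬G.Adj b e)
    (hce : ¬G.Adj c e) : False := by
  have twinFree : ∀ i j : Fin 5, (∀ k, cycle5.Adj i k ↔ cycle5.Adj j k) → i = j := by
    unfold cycle5; decide
  refine h.elim_of_adj_iff (f := ![a, b, c, d, e]) (adj_iff_of_forall_lt fun i j hij => ?_)
    fun i j hij htw => absurd (twinFree i j htw) hij
  fin_cases i <;> fin_cases j <;>
    simp [cycle5, hab, hbc, hcd, hde, hea.symm, hac, had, hbd, hbe, hce] at hij ⊢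

theorem Free.elim_pathGraph6 (h : _root_.Free (pathGraph 6) G) {a b c d e f : V}
    (hab : G.Adj a b) (hbc : G.Adj b c) (hcd : G.Adj c d) (hde : G.Adj d e) (hef : G.Adj e f)
    (hac : ¬G.Adj a c) (had : ¬G.Adj a d) (hae : ¬G.Adj a e) (haf : ¬G.Adj a f)
    (hbd : ¬G.Adj b d) (hbe : ¬G.Adj b e) (hbf : ¬G.Adj b f)
    (hce : ¬G.Adj c e) (hcf : ¬G.Adj c f) (hdf : ¬G.Adj d f) : False := by
  have twinFree :
      ∀ i j : Fin 6, (∀ k, (pathGraph 6).Adj i k ↔ (pathGraph 6).Adj j k) → i = j := by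
    simp only [pathGraph_adj]; decide
  refine h.elim_of_adj_iff (f := ![a, b, c, d, e, f]) (adj_iff_of_forall_lt fun i j hij => ?_)
    fun i j hij htw => absurd (twinFree i j htw) hij
  fin_cases i <;> fin_cases j <;>
    simp [pathGraph_adj, hab, hbc, hcd, hde, hef, hac, had, hae, haf, hbd, hbe, hbf, hce, hcf,
      hdf] at hij ⊢

theorem exists_adj_adj_or_induced_path_of_connected {Q : Set V} (hQ : (G.induce Q).Connected)
    {x y : V} (hx : ∃ a ∈ Q, G.Adj x a) (hy : ∃ b ∈ Q, G.Adj y b)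
    (hxy : ∀ q ∈ Q, G.Adj x q → ¬G.Adj y q) :
    (∃ a ∈ Q, ∃ b ∈ Q, G.Adj x a ∧ G.Adj a b ∧ G.Adj b y) ∨
    ∃ a ∈ Q, ∃ c ∈ Q, ∃ d ∈ Q, G.Adj x a ∧ G.Adj a c ∧ G.Adj c d ∧
      ¬G.Adj x c ∧ ¬G.Adj x d ∧ ¬G.Adj a d := by
  suffices key : ∀ n (a b : Q) (w : (G.induce Q).Walk a b), w.length = n →
      G.Adj x a → G.Adj y b → _ by
    obtain ⟨a, ha, hxa⟩ := hx
    obtain ⟨b, hb, hyb⟩ := hy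
    obtain ⟨w⟩ := hQ.preconnected ⟨a, ha⟩ ⟨b, hb⟩
    exact key _ _ _ w rfl hxa hyb
  intro n
  induction n using Nat.strong_induction_on with
  | _ n ih =>
  intro a b w hlen hxa hyb
  cases w with
  | nil => exact absurd hyb (hxy a a.2 hxa)
  | @cons _ c _ hac w =>
    by_cases hxc : G.Adj x c
    · exact ih w.length (by simp [← hlen]) c b w rfl hxc hyb
    cases w with
    | nil => exact Or.inl ⟨a, a.2, b, b.2, hxa, hac, hyb.symm⟩
    | @cons _ d _ hcd w =>
      by_cases hxd : G.Adj x d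
      · exact ih w.length (by simp [← hlen]) d b w rfl hxd hyb
      by_cases had : G.Adj a d
      · -- the shortcut `a d` gives a shorter walk
        have had : (G.induce Q).Adj a d := had
        exact ih (w.cons had).length (by simp [← hlen]) a b _ rfl hxa hyb
      exact Or.inr ⟨a, a.2, c, c.2, d, d.2, hxa, hac, hcd, hxc, hxd, had⟩

theorem adj_of_common_neighbor_of_connected (hp6 : _root_.Free (pathGraph 6) G)
    (hban : _root_.Free banner G) (hc5 : _root_.Free cycle5 G) {u p x y : V} {Q : Set V}
    (hup : G.Adj u p) (hxu : G.Adj x u) (hyu : G.Adj y u) (hxp : ¬G.Adj x p) (hyp : ¬G.Adj y p)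
    (hQ : (G.induce Q).Connected) (hQu : ∀ q ∈ Q, ¬G.Adj u q) (hQp : ∀ q ∈ Q, ¬G.Adj p q)
    (hx : ∃ q ∈ Q, G.Adj x q) (hy : ∃ q ∈ Q, G.Adj y q) (hne : x ≠ y) : G.Adj x y := by
  by_contra hxy
  have hcommon : ∀ q ∈ Q, G.Adj x q → ¬G.Adj y q := fun q hq hxq hyq =>
    hban.elim_banner hxu.symm hxq hyq.symm hyu hup (hQu q hq) hxy hxp
      (fun h => hQp q hq h.symm) hyp hne
  rcases exists_adj_adj_or_induced_path_of_connected hQ hx hy hcommon with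
    ⟨a, ha, b, hb, hxa, hab, hby⟩ | ⟨a, ha, c, hc, d, hd, hxa, hac, hcd, hxc, hxd, had⟩
  · exact hc5.elim_cycle5 hxu.symm hxa hab hby hyu (hQu a ha) (hQu b hb)
      (fun hxb => hcommon b hb hxb hby.symm) hxy (fun hay => hcommon a ha hxa hay.symm)
  · exact hp6.elim_pathGraph6 hup.symm hxu.symm hxa hac hcd (fun h => hxp h.symm) (hQp a ha)
      (hQp c hc) (hQp d hd) (hQu a ha) (hQu c hc) (hQu d hd) hxc hxd had

end

theorem stmt_9 {V : Type*} (G : SimpleGraph V)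
    (hp6 : _root_.Free (SimpleGraph.pathGraph 6) G) (hban : _root_.Free banner G)
    (hc5 : _root_.Free cycle5 G)
    (v : Fin 5 → V) (hH : IsInducedHouse G v)
    (Q : Set V) (hQconn : (G.induce Q).Connected) (hQ : Anticomplete5 G Q v) :
    G.IsClique
      ({x | {j | G.Adj x (v j)} = ({0, 3} : Set (Fin 5)) ∧ ∃ q ∈ Q, G.Adj x q} : Set V) := by
  rintro x ⟨hxH, hxQ⟩ y ⟨hyH, hyQ⟩ hne
  have hx := Set.ext_iff.mp hxH
  have hy := Set.ext_iff.mp hyH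
  exact adj_of_common_neighbor_of_connected hp6 hban hc5 ((hH.2 0 1).mpr (by decide))
    ((hx 0).mpr (by simp)) ((hy 0).mpr (by simp)) (fun h => by simpa using (hx 1).mp h)
    (fun h => by simpa using (hy 1).mp h) hQconn (fun q hq h => hQ.2 q hq 0 h.symm)
    (fun q hq h => hQ.2 q hq 1 h.symm) hxQ hyQ hne
end
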